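/- Let G be a group that is generated by the conjugacy class of a single element t (i.e. the set {g t g⁻¹ : g ∈ G} generates G). Suppose there exist elements a₁, a₂, a₃, a₄ and b₁, b₂, b₃ of G, each conjugate in G to t, such that a₁·a₂·a₃·a₄ = b₁·b₂·b₃. Then the abelianization of G is trivial. (This is the abstract group-theoretic core of Harer's argument that the abelianization of the mapping class group of a closed surface of genus g > 2 is trivial: the mapping class group is generated by Dehn twists on nonseparating curves, any two such twists are conjugate, and the lantern identity expresses a product of four such twists as a product of three.) -/
import Mathlib

/-- If a group `G` is generated by the conjugacy class of an element `t`, and a product of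
four conjugates of `t` equals a product of three conjugates of `t`, then the abelianization
of `G` is trivial (the core of Harer's argument via the lantern identity). -/
theorem abelianization_trivial_of_lantern {G : Type*} [Group G] (t : G)
    (hgen : Subgroup.closure {x : G | ∃ g : G, x = g * t * g⁻¹} = ⊤)
    (a : Fin 4 → G) (b : Fin 3 → G)
    (ha : ∀ i, ∃ g : G, a i = g * t * g⁻¹)
    (hb : ∀ i, ∃ g : G, b i = g * t * g⁻¹)
    (hrel : a 0 * a 1 * a 2 * a 3 = b 0 * b 1 * b 2) :
    Subsingleton (Abelianization G) := by
  set f := Abelianization.of (G := G) with hf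
  have hconj : ∀ x : G, (∃ g : G, x = g * t * g⁻¹) → f x = f t := by
    rintro x ⟨g, rfl⟩
    simp [mul_comm, mul_assoc, mul_left_comm]
  have ht : f t = 1 := by
    have h4 : f t * f t * f t * f t = f t * f t * f t := by
      have := congrArg f hrel
      simp only [map_mul] at this
      rw [hconj _ (ha 0), hconj _ (ha 1), hconj _ (ha 2), hconj _ (ha 3),
        hconj _ (hb 0), hconj _ (hb 1), hconj _ (hb 2)] at this
      exact this
    exact mul_left_cancel (a := f t * f t * f t) (by rw [mul_one]; exact h4)
  have hall : ∀ x : G, f x = 1 := by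
    intro x
    have hx : x ∈ Subgroup.closure {x : G | ∃ g : G, x = g * t * g⁻¹} := by
      rw [hgen]; trivial
    refine Subgroup.closure_induction (fun y hy => ?_) (by simp) ?_ ?_ hx
    · rw [hconj y hy, ht]
    · intro y z _ _ hy hz; rw [map_mul, hy, hz, mul_one]
    · intro y _ hy; rw [map_inv, hy, inv_one]
  constructor
  intro x y
  induction x using QuotientGroup.induction_on with | H x =>
  induction y using QuotientGroup.induction_on with | H y =>
  show f x = f y
  rw [hall x, hall y]
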